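/- arXiv:1803.01101 — 3 statements merged into one kernel-verified Lean document; each statement's English description precedes it below -/
import Mathlib

section
/- Suppose g : 𝕋 × [0,∞) → ℝ is Lipschitz and for every x the function t ↦ g(x,t) is differentiable on [0,∞). For each t, let x₊(t) be a point where g(·,t) attains its maximum, and set g₊(t) = g(x₊(t), t). Then g₊ is Lipschitz with the same Lipschitz constant as g, and for almost every t, g₊ is differentiable at t with derivative ∂ₜg(x₊(t), t). -/
/-!
Each `g x` is `K`-Lipschitz in time, and `g₊ t` dominates `g (x₊ u) t`, so
`g₊ t - g₊ u ≤ g (x₊ t) t - g (x₊ t) u ≤ K |t - u|`; symmetrising gives the Lipschitz bound.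
At an interior time `t` where `g₊` is differentiable (almost every `t`, by Rademacher),
`g (x₊ t) ·` touches `g₊` from below at `t`, so the two derivatives agree there.
-/

open MeasureTheory
open scoped Real

instance : Fact (0 < 2 * Real.pi) := ⟨by positivity⟩

open Set Filter Topology

theorem LipschitzOnWith.comp_prodMk_left {α β γ : Type*} [PseudoEMetricSpace α]
    [PseudoEMetricSpace β] [PseudoEMetricSpace γ] {f : α × β → γ} {K : NNReal} {s : Set β}
    (hf : LipschitzOnWith K f (univ ×ˢ s)) (a : α) :
    LipschitzOnWith K (fun b => f (a, b)) s := by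
  have h := hf.comp (LipschitzWith.prodMk_left a).lipschitzOnWith
    fun b hb => mk_mem_prod (mem_univ a) hb
  rwa [mul_one] at h

theorem LipschitzOnWith.eval_maximizer {α β : Type*} [PseudoMetricSpace β] {f : α → β → ℝ}
    {K : NNReal} {s : Set β} (hf : ∀ x, LipschitzOnWith K (f x) s) (xp : β → α)
    (hmax : ∀ t ∈ s, ∀ y, f y t ≤ f (xp t) t) :
    LipschitzOnWith K (fun t => f (xp t) t) s :=
  LipschitzOnWith.of_le_add_mul K fun t ht u hu =>
    calc f (xp t) t ≤ f (xp t) u + K * dist t u := (hf (xp t)).le_add_mul ht hu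
      _ ≤ f (xp u) u + K * dist t u := by gcongr; exact hmax u hu (xp t)

theorem DifferentiableAt.hasDerivAt_of_eventually_le_of_eq {F h : ℝ → ℝ} {t h' : ℝ}
    (hF : DifferentiableAt ℝ F t) (hh : HasDerivAt h h' t) (hle : ∀ᶠ s in 𝓝 t, h s ≤ F s)
    (heq : h t = F t) : HasDerivAt F h' t := by
  have hmin : IsLocalMin (fun s => F s - h s) t := by
    filter_upwards [hle] with s hs
    linarith
  have hzero : deriv F t - h' = 0 := hmin.hasDerivAt_eq_zero (hF.hasDerivAt.sub hh)
  rw [← sub_eq_zero.mp hzero]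
  exact hF.hasDerivAt

/-- Rademacher-type lemma for the evolution of the maximum of a Lipschitz function
on the torus: `g₊(t) = g(x₊(t), t)` is Lipschitz with the same constant, and a.e.
its derivative equals the time-partial derivative of `g` along the maximizer. -/
theorem stmt2 (g : AddCircle (2 * Real.pi) → ℝ → ℝ) (K : NNReal)
    (hLip : LipschitzOnWith K (fun p : AddCircle (2 * Real.pi) × ℝ => g p.1 p.2)
      (Set.univ ×ˢ Set.Ici 0))
    (hdiff : ∀ x : AddCircle (2 * Real.pi), ∀ t ∈ Set.Ici (0 : ℝ),
      DifferentiableWithinAt ℝ (g x) (Set.Ici 0) t)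
    (xp : ℝ → AddCircle (2 * Real.pi))
    (hmax : ∀ t ∈ Set.Ici (0 : ℝ), ∀ y, g y t ≤ g (xp t) t) :
    LipschitzOnWith K (fun t => g (xp t) t) (Set.Ici 0) ∧
    ∀ᵐ t ∂(volume.restrict (Set.Ici (0 : ℝ))),
      HasDerivWithinAt (fun s => g (xp s) s)
        (derivWithin (g (xp t)) (Set.Ici 0) t) (Set.Ici 0) t := by
  have hgp : LipschitzOnWith K (fun t => g (xp t) t) (Ici 0) :=
    LipschitzOnWith.eval_maximizer (fun x => hLip.comp_prodMk_left x) xp hmax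
  refine ⟨hgp, ?_⟩
  have hpos : ∀ᵐ t ∂(volume.restrict (Ici (0 : ℝ))), 0 < t := by
    rw [← Measure.restrict_congr_set Ioi_ae_eq_Ici]
    exact ae_restrict_mem measurableSet_Ioi
  filter_upwards [hgp.ae_differentiableWithinAt measurableSet_Ici, hpos] with t hgp_t ht
  have hnhds : Ici (0 : ℝ) ∈ 𝓝 t := Ici_mem_nhds ht
  rw [derivWithin_of_mem_nhds hnhds]
  refine (DifferentiableAt.hasDerivAt_of_eventually_le_of_eq (hgp_t.differentiableAt hnhds)
    ((hdiff (xp t) t ht.le).differentiableAt hnhds).hasDerivAt ?_ rfl).hasDerivWithinAt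
  filter_upwards [hnhds] with s hs using hmax s hs (xp t)
end

section
/- For smooth ρ, u : 𝕋 → ℝ, the identity ∫_𝕋 [2ρu Λ_α(ρu) − ρ u² Λ_α ρ − ρ Λ_α(ρ u²)] dx = ∫_𝕋 ∫_ℝ ρ(x) ρ(y) |u(x)−u(y)|² |x−y|^{-1-α} dy dx holds. -/
open MeasureTheory Filter
open scoped Real

lemma periodic_bound' {f : ℝ → ℝ} (hf : Continuous f)
    (hper : Function.Periodic f (2 * Real.pi)) :
    ∃ M : ℝ, 0 ≤ M ∧ ∀ x, |f x| ≤ M := by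
  obtain ⟨M, hM⟩ := (isCompact_Icc (a := (0:ℝ)) (b := 2 * Real.pi)).exists_bound_of_continuousOn
    hf.continuousOn
  refine ⟨max M 0, le_max_right _ _, fun x => ?_⟩
  obtain ⟨y, hy, hxy⟩ := hper.exists_mem_Ico₀ (by positivity) x
  rw [hxy, ← Real.norm_eq_abs]
  exact le_trans (hM y (Set.Ico_subset_Icc_self hy)) (le_max_left _ _)

lemma neg_pre_integrableOn' {f : ℝ → ℝ} (hf : ∀ z, f (-z) = f z) {s : Set ℝ}
    (hs : MeasurableSet s) (h : IntegrableOn f (Neg.neg ⁻¹' s)) : IntegrableOn f s := by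
  refine (MeasurePreserving.integrableOn_comp_preimage
    (Measure.measurePreserving_neg (volume : Measure ℝ))
    (Homeomorph.neg ℝ).measurableEmbedding).1 ?_
  exact h.congr_fun (fun z _ => (hf z).symm) (hs.preimage measurable_neg)

lemma int_rpow_tail' {α : ℝ} (hα0 : 0 < α) {ε : ℝ} (hε : 0 < ε) :
    IntegrableOn (fun z : ℝ => |z| ^ (-(1 + α))) {z : ℝ | ε ≤ |z|} := by
  have hIoi : IntegrableOn (fun z : ℝ => |z| ^ (-(1 + α))) (Set.Ioi ε) := by
    refine (integrableOn_Ioi_rpow_of_lt (a := -(1+α)) (by linarith) hε).congr_fun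
      (fun z hz => ?_) measurableSet_Ioi
    rw [abs_of_pos (hε.trans hz)]
  have hIci : IntegrableOn (fun z : ℝ => |z| ^ (-(1 + α))) (Set.Ici ε) := by
    rwa [integrableOn_Ici_iff_integrableOn_Ioi]
  have hIic : IntegrableOn (fun z : ℝ => |z| ^ (-(1 + α))) (Set.Iic (-ε)) := by
    refine neg_pre_integrableOn' (fun z => by rw [abs_neg]) measurableSet_Iic ?_
    have hpre : (Neg.neg ⁻¹' Set.Iic (-ε)) = Set.Ici ε := by
      ext z; simp [neg_le]
    rwa [hpre]
  refine (hIic.union hIci).mono_set (fun z hz => ?_)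
  have hz' : ε ≤ |z| := hz
  rcases le_abs.1 hz' with h | h
  · exact Or.inr h
  · exact Or.inl (by simpa [le_neg] using h)

lemma int_rpow_Ioo' {α : ℝ} (hα2 : α < 2) :
    IntegrableOn (fun z : ℝ => |z| ^ (1 - α)) (Set.Ioo (-1 : ℝ) 1) := by
  have h1 : IntegrableOn (fun z : ℝ => |z| ^ (1 - α)) (Set.Ioo (0:ℝ) 1) := by
    refine ((intervalIntegral.integrableOn_Ioo_rpow_iff (s := 1 - α) one_pos).2
      (by linarith)).congr_fun (fun z hz => ?_) measurableSet_Ioo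
    rw [abs_of_pos hz.1]
  have h2 : IntegrableOn (fun z : ℝ => |z| ^ (1 - α)) (Set.Ioo (-1:ℝ) 0) := by
    refine neg_pre_integrableOn' (fun z => by rw [abs_neg]) measurableSet_Ioo ?_
    have hpre : (Neg.neg ⁻¹' Set.Ioo (-1:ℝ) 0) = Set.Ioo (0:ℝ) 1 := by
      ext z
      simp only [Set.mem_preimage, Set.mem_Ioo]
      constructor <;> rintro ⟨ha, hb⟩ <;> constructor <;> linarith
    rwa [hpre]
  have h3 : IntegrableOn (fun z : ℝ => |z| ^ (1 - α)) (Set.Ico (0:ℝ) 1) :=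
    (integrableOn_Ico_iff_integrableOn_Ioo).2 h1
  refine (h2.union h3).mono_set (fun z hz => ?_)
  rcases lt_or_ge z 0 with h | h
  · exact Or.inl ⟨hz.1, h⟩
  · exact Or.inr ⟨h, hz.2⟩

/-- Dissipation symmetrization identity:
`∫ [2ρu Λ_α(ρu) − ρu² Λ_α ρ − ρ Λ_α(ρu²)] = ∫∫ ρ(x)ρ(y)|u(x)−u(y)|²|x−y|^{-1-α}`. -/
theorem stmt5 (α : ℝ) (hα0 : 0 < α) (hα2 : α < 2)
    (ρ u Lρu Lρ Lρu2 : ℝ → ℝ)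
    (hρ : ContDiff ℝ (⊤ : ℕ∞) ρ) (hu : ContDiff ℝ (⊤ : ℕ∞) u)
    (hρper : Function.Periodic ρ (2 * Real.pi))
    (huper : Function.Periodic u (2 * Real.pi))
    (hLρu : ∀ x : ℝ, Tendsto
      (fun ε : ℝ => ∫ z in {z : ℝ | ε ≤ |z|},
        (ρ x * u x - ρ (x + z) * u (x + z)) / |z| ^ (1 + α))
      (nhdsWithin 0 (Set.Ioi 0)) (nhds (Lρu x)))
    (hLρ : ∀ x : ℝ, Tendsto
      (fun ε : ℝ => ∫ z in {z : ℝ | ε ≤ |z|},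
        (ρ x - ρ (x + z)) / |z| ^ (1 + α))
      (nhdsWithin 0 (Set.Ioi 0)) (nhds (Lρ x)))
    (hLρu2 : ∀ x : ℝ, Tendsto
      (fun ε : ℝ => ∫ z in {z : ℝ | ε ≤ |z|},
        (ρ x * (u x) ^ 2 - ρ (x + z) * (u (x + z)) ^ 2) / |z| ^ (1 + α))
      (nhdsWithin 0 (Set.Ioi 0)) (nhds (Lρu2 x))) :
    (∫ x in (0:ℝ)..(2 * Real.pi),
        (2 * ρ x * u x * Lρu x - ρ x * (u x) ^ 2 * Lρ x - ρ x * Lρu2 x))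
      = ∫ x in (0:ℝ)..(2 * Real.pi),
          ∫ y : ℝ, ρ x * ρ y * (u x - u y) ^ 2 / |x - y| ^ (1 + α) := by
  obtain ⟨Mρ, hMρ0, hMρ⟩ := periodic_bound' hρ.continuous hρper
  obtain ⟨Mu, hMu0, hMu⟩ := periodic_bound' hu.continuous huper
  have hudiff : Differentiable ℝ u := hu.differentiable (by simp)
  have hderiv_per : Function.Periodic (deriv u) (2 * Real.pi) := by
    intro y
    have h1 : (fun t => u (t + 2 * Real.pi)) = u := funext fun t => huper t
    rw [← deriv_comp_add_const, h1]
  obtain ⟨L, hL0, hL⟩ := periodic_bound' (hu.continuous_deriv (by simp)) hderiv_per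
  have hLip : ∀ a b : ℝ, |u a - u b| ≤ L * |a - b| := by
    intro a b
    have := convex_univ.norm_image_sub_le_of_norm_deriv_le
      (f := u) (fun y _ => hudiff y) (fun y _ => by rw [Real.norm_eq_abs]; exact hL y)
      (Set.mem_univ b) (Set.mem_univ a)
    simpa [Real.norm_eq_abs] using this
  have hd_cont : Continuous (fun z : ℝ => |z| ^ (1 + α)) :=
    (Real.continuous_rpow_const (by positivity)).comp continuous_abs
  have hd_nonneg : ∀ z : ℝ, 0 ≤ |z| ^ (1 + α) := fun z => Real.rpow_nonneg (abs_nonneg z) _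
  have hdom : ∀ (f : ℝ → ℝ) (C : ℝ), (∀ z, |f z| ≤ C) →
      ∀ z : ℝ, ‖f z / |z| ^ (1 + α)‖ ≤ C * |z| ^ (-(1 + α)) := by
    intro f C hC z
    rw [Real.norm_eq_abs, abs_div, abs_of_nonneg (hd_nonneg z),
      Real.rpow_neg (abs_nonneg z), div_eq_mul_inv]
    exact mul_le_mul_of_nonneg_right (hC z) (inv_nonneg.2 (hd_nonneg z))
  have hSmeas : ∀ ε : ℝ, MeasurableSet {z : ℝ | ε ≤ |z|} := fun ε =>
    measurableSet_le measurable_const continuous_abs.measurable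
  have hIOn : ∀ (f : ℝ → ℝ), Continuous f → ∀ (C : ℝ), (∀ z, |f z| ≤ C) →
      ∀ ε : ℝ, 0 < ε → IntegrableOn (fun z => f z / |z| ^ (1 + α)) {z : ℝ | ε ≤ |z|} := by
    intro f hf C hC ε hε
    exact Integrable.mono' ((int_rpow_tail' hα0 hε).const_mul C)
      ((hf.measurable.div hd_cont.measurable).aestronglyMeasurable)
      (ae_of_all _ fun z => hdom f C hC z)
  have key : ∀ x : ℝ, 2 * ρ x * u x * Lρu x - ρ x * (u x) ^ 2 * Lρ x - ρ x * Lρu2 x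
      = ∫ y : ℝ, ρ x * ρ y * (u x - u y) ^ 2 / |x - y| ^ (1 + α) := by
    intro x
    set g : ℝ → ℝ := fun z => ρ x * ρ (x + z) * (u x - u (x + z)) ^ 2 / |z| ^ (1 + α) with hgdef
    have hnum_cont : Continuous fun z : ℝ => ρ x * ρ (x + z) * (u x - u (x + z)) ^ 2 := by
      have h1 : Continuous fun z : ℝ => ρ (x + z) :=
        hρ.continuous.comp (continuous_const.add continuous_id)
      have h2 : Continuous fun z : ℝ => u (x + z) :=
        hu.continuous.comp (continuous_const.add continuous_id)
      exact (continuous_const.mul h1).mul ((continuous_const.sub h2).pow 2)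
    have hgmeas : Measurable g := hnum_cont.measurable.div hd_cont.measurable
    have hnum_tail : ∀ z : ℝ, |ρ x * ρ (x + z) * (u x - u (x + z)) ^ 2|
        ≤ Mρ * Mρ * (2 * Mu) ^ 2 := by
      intro z
      rw [abs_mul, abs_mul, abs_pow]
      have h3 : |u x - u (x + z)| ≤ 2 * Mu := by
        calc |u x - u (x + z)| ≤ |u x| + |u (x + z)| := abs_sub _ _
        _ ≤ Mu + Mu := add_le_add (hMu x) (hMu (x + z))
        _ = 2 * Mu := by ring
      exact mul_le_mul (mul_le_mul (hMρ x) (hMρ _) (abs_nonneg _) hMρ0)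
        (pow_le_pow_left₀ (abs_nonneg _) h3 2) (by positivity) (by positivity)
    have hg_tail : IntegrableOn g {z : ℝ | (1:ℝ) ≤ |z|} :=
      Integrable.mono' ((int_rpow_tail' hα0 one_pos).const_mul (Mρ * Mρ * (2 * Mu) ^ 2))
        hgmeas.aestronglyMeasurable (ae_of_all _ fun z => hdom _ _ hnum_tail z)
    have hg_near : IntegrableOn g (Set.Ioo (-1:ℝ) 1) := by
      refine Integrable.mono' ((int_rpow_Ioo' hα2).const_mul (Mρ * Mρ * L ^ 2))
        hgmeas.aestronglyMeasurable (ae_of_all _ fun z => ?_)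
      rcases eq_or_ne z 0 with rfl | hz
      · simp only [hgdef, abs_zero, Real.zero_rpow (show (1:ℝ) + α ≠ 0 by positivity),
          div_zero, norm_zero]
        positivity
      · have hzpos : 0 < |z| := abs_pos.2 hz
        have hnum : |ρ x * ρ (x + z) * (u x - u (x + z)) ^ 2| ≤ Mρ * Mρ * L ^ 2 * z ^ 2 := by
          rw [abs_mul, abs_mul, abs_pow]
          have h3 : |u x - u (x + z)| ≤ L * |z| := by
            have := hLip x (x + z)
            simpa [show x - (x + z) = -z by ring, abs_neg] using this
          have h4 : |u x - u (x + z)| ^ 2 ≤ (L * |z|) ^ 2 :=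
            pow_le_pow_left₀ (abs_nonneg _) h3 2
          calc |ρ x| * |ρ (x + z)| * |u x - u (x + z)| ^ 2
              ≤ Mρ * Mρ * (L * |z|) ^ 2 :=
                mul_le_mul (mul_le_mul (hMρ x) (hMρ _) (abs_nonneg _) hMρ0) h4
                  (by positivity) (by positivity)
            _ = Mρ * Mρ * L ^ 2 * z ^ 2 := by rw [mul_pow, sq_abs]; ring
        have hzz : z ^ 2 / |z| ^ (1 + α) = |z| ^ (1 - α) := by
          rw [← sq_abs, ← Real.rpow_natCast |z| 2, ← Real.rpow_sub hzpos]
          congr 1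
          push_cast
          ring
        simp only [hgdef, Real.norm_eq_abs]
        rw [abs_div, abs_of_nonneg (hd_nonneg z)]
        calc |ρ x * ρ (x + z) * (u x - u (x + z)) ^ 2| / |z| ^ (1 + α)
            ≤ (Mρ * Mρ * L ^ 2 * z ^ 2) / |z| ^ (1 + α) := by gcongr
          _ = Mρ * Mρ * L ^ 2 * (z ^ 2 / |z| ^ (1 + α)) := by ring
          _ = Mρ * Mρ * L ^ 2 * |z| ^ (1 - α) := by rw [hzz]
    have hgint : Integrable g := by
      rw [← integrableOn_univ]
      refine (hg_near.union hg_tail).mono_set (fun z _ => ?_)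
      rcases lt_or_ge |z| 1 with h | h
      · exact Or.inl (Set.mem_Ioo.2 (abs_lt.1 h))
      · exact Or.inr h
    have hpt : ∀ z : ℝ,
        2 * ρ x * u x * ((ρ x * u x - ρ (x + z) * u (x + z)) / |z| ^ (1 + α))
          - ρ x * (u x) ^ 2 * ((ρ x - ρ (x + z)) / |z| ^ (1 + α))
          - ρ x * ((ρ x * (u x) ^ 2 - ρ (x + z) * (u (x + z)) ^ 2) / |z| ^ (1 + α)) = g z := by
      intro z
      simp only [hgdef]
      rw [← mul_div_assoc, ← mul_div_assoc, ← mul_div_assoc, div_sub_div_same, div_sub_div_same]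
      congr 1
      ring
    have hf1 : Continuous fun z : ℝ => ρ x * u x - ρ (x + z) * u (x + z) := by
      have h1 : Continuous fun z : ℝ => ρ (x + z) * u (x + z) :=
        (hρ.continuous.comp (continuous_const.add continuous_id)).mul
          (hu.continuous.comp (continuous_const.add continuous_id))
      exact continuous_const.sub h1
    have hf2 : Continuous fun z : ℝ => ρ x - ρ (x + z) :=
      continuous_const.sub (hρ.continuous.comp (continuous_const.add continuous_id))
    have hf3 : Continuous fun z : ℝ => ρ x * (u x) ^ 2 - ρ (x + z) * (u (x + z)) ^ 2 := by
      have h1 : Continuous fun z : ℝ => ρ (x + z) * (u (x + z)) ^ 2 :=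
        (hρ.continuous.comp (continuous_const.add continuous_id)).mul
          ((hu.continuous.comp (continuous_const.add continuous_id)).pow 2)
      exact continuous_const.sub h1
    have hbnd : ∀ y : ℝ, |ρ y * u y| ≤ Mρ * Mu := fun y => by
      rw [abs_mul]; exact mul_le_mul (hMρ y) (hMu y) (abs_nonneg _) hMρ0
    have hbnd2 : ∀ y : ℝ, |ρ y * (u y) ^ 2| ≤ Mρ * Mu ^ 2 := fun y => by
      rw [abs_mul, abs_pow]
      exact mul_le_mul (hMρ y) (pow_le_pow_left₀ (abs_nonneg _) (hMu y) 2) (by positivity) hMρ0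
    have hC1 : ∀ z, |ρ x * u x - ρ (x + z) * u (x + z)| ≤ Mρ * Mu + Mρ * Mu := fun z =>
      le_trans (abs_sub _ _) (add_le_add (hbnd x) (hbnd (x + z)))
    have hC2 : ∀ z, |ρ x - ρ (x + z)| ≤ Mρ + Mρ := fun z =>
      le_trans (abs_sub _ _) (add_le_add (hMρ x) (hMρ (x + z)))
    have hC3 : ∀ z, |ρ x * (u x) ^ 2 - ρ (x + z) * (u (x + z)) ^ 2| ≤ Mρ * Mu ^ 2 + Mρ * Mu ^ 2 :=
      fun z => le_trans (abs_sub _ _) (add_le_add (hbnd2 x) (hbnd2 (x + z)))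
    have htrunc : ∀ ε ∈ Set.Ioi (0:ℝ),
        (∫ z in {z : ℝ | ε ≤ |z|}, g z)
          = 2 * ρ x * u x * (∫ z in {z : ℝ | ε ≤ |z|},
              (ρ x * u x - ρ (x + z) * u (x + z)) / |z| ^ (1 + α))
            - ρ x * (u x) ^ 2 * (∫ z in {z : ℝ | ε ≤ |z|},
              (ρ x - ρ (x + z)) / |z| ^ (1 + α))
            - ρ x * (∫ z in {z : ℝ | ε ≤ |z|},
              (ρ x * (u x) ^ 2 - ρ (x + z) * (u (x + z)) ^ 2) / |z| ^ (1 + α)) := by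
      intro ε hε
      have hia := hIOn _ hf1 _ hC1 ε hε
      have hib := hIOn _ hf2 _ hC2 ε hε
      have hic := hIOn _ hf3 _ hC3 ε hε
      calc (∫ z in {z : ℝ | ε ≤ |z|}, g z)
          = ∫ z in {z : ℝ | ε ≤ |z|},
              (2 * ρ x * u x * ((ρ x * u x - ρ (x + z) * u (x + z)) / |z| ^ (1 + α))
                - ρ x * (u x) ^ 2 * ((ρ x - ρ (x + z)) / |z| ^ (1 + α))
                - ρ x * ((ρ x * (u x) ^ 2 - ρ (x + z) * (u (x + z)) ^ 2) / |z| ^ (1 + α))) :=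
            integral_congr_ae (ae_of_all _ fun z => (hpt z).symm)
        _ = _ := by
            have hA : Integrable (fun z : ℝ =>
                2 * ρ x * u x * ((ρ x * u x - ρ (x + z) * u (x + z)) / |z| ^ (1 + α)))
                (volume.restrict {z : ℝ | ε ≤ |z|}) := hia.const_mul _
            have hB : Integrable (fun z : ℝ =>
                ρ x * (u x) ^ 2 * ((ρ x - ρ (x + z)) / |z| ^ (1 + α)))
                (volume.restrict {z : ℝ | ε ≤ |z|}) := hib.const_mul _
            have hC' : Integrable (fun z : ℝ =>
                ρ x * ((ρ x * (u x) ^ 2 - ρ (x + z) * (u (x + z)) ^ 2) / |z| ^ (1 + α)))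
                (volume.restrict {z : ℝ | ε ≤ |z|}) := hic.const_mul _
            have hD1 : Integrable (fun z : ℝ =>
                2 * ρ x * u x * ((ρ x * u x - ρ (x + z) * u (x + z)) / |z| ^ (1 + α))
                  - ρ x * (u x) ^ 2 * ((ρ x - ρ (x + z)) / |z| ^ (1 + α)))
                (volume.restrict {z : ℝ | ε ≤ |z|}) := hA.sub hB
            simp only [integral_sub hD1 hC', integral_sub hA hB,
              integral_const_mul]
    have h0ae : ∀ᵐ z : ℝ, z ≠ 0 := by
      rw [ae_iff]
      simp only [not_not, Set.setOf_eq_eq_singleton]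
      exact measure_singleton 0
    have hptw : ∀ᵐ z : ℝ, Tendsto (fun ε : ℝ => Set.indicator {z : ℝ | ε ≤ |z|} g z)
        (nhdsWithin 0 (Set.Ioi 0)) (nhds (g z)) := by
      refine h0ae.mono fun z hz => ?_
      have hmem : Set.Ioo (0:ℝ) |z| ∈ nhdsWithin (0:ℝ) (Set.Ioi 0) :=
        Ioo_mem_nhdsGT_of_mem ⟨le_refl 0, abs_pos.2 hz⟩
      refine Tendsto.congr' ?_ tendsto_const_nhds
      refine eventually_of_mem hmem fun ε hε => ?_
      exact (Set.indicator_of_mem (show z ∈ {z : ℝ | ε ≤ |z|} from le_of_lt hε.2) g).symm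
    have hgt : Tendsto (fun ε : ℝ => ∫ z in {z : ℝ | ε ≤ |z|}, g z)
        (nhdsWithin 0 (Set.Ioi 0)) (nhds (∫ z, g z)) := by
      have h := MeasureTheory.tendsto_integral_filter_of_dominated_convergence
        (μ := volume) (l := nhdsWithin (0:ℝ) (Set.Ioi 0))
        (F := fun ε (z : ℝ) => Set.indicator {z : ℝ | ε ≤ |z|} g z) (f := g)
        (bound := fun z => ‖g z‖)
        (Eventually.of_forall fun ε => (hgmeas.indicator (hSmeas ε)).aestronglyMeasurable)
        (Eventually.of_forall fun ε => ae_of_all _ fun z => norm_indicator_le_norm_self g z)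
        hgint.norm hptw
      refine h.congr fun ε => ?_
      exact integral_indicator (hSmeas ε)
    have hcomb : Tendsto (fun ε : ℝ =>
        2 * ρ x * u x * (∫ z in {z : ℝ | ε ≤ |z|},
            (ρ x * u x - ρ (x + z) * u (x + z)) / |z| ^ (1 + α))
          - ρ x * (u x) ^ 2 * (∫ z in {z : ℝ | ε ≤ |z|},
            (ρ x - ρ (x + z)) / |z| ^ (1 + α))
          - ρ x * (∫ z in {z : ℝ | ε ≤ |z|},
            (ρ x * (u x) ^ 2 - ρ (x + z) * (u (x + z)) ^ 2) / |z| ^ (1 + α)))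
        (nhdsWithin 0 (Set.Ioi 0))
        (nhds (2 * ρ x * u x * Lρu x - ρ x * (u x) ^ 2 * Lρ x - ρ x * Lρu2 x)) :=
      (((hLρu x).const_mul _).sub ((hLρ x).const_mul _)).sub ((hLρu2 x).const_mul _)
    have hev : (fun ε : ℝ =>
        2 * ρ x * u x * (∫ z in {z : ℝ | ε ≤ |z|},
            (ρ x * u x - ρ (x + z) * u (x + z)) / |z| ^ (1 + α))
          - ρ x * (u x) ^ 2 * (∫ z in {z : ℝ | ε ≤ |z|},
            (ρ x - ρ (x + z)) / |z| ^ (1 + α))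
          - ρ x * (∫ z in {z : ℝ | ε ≤ |z|},
            (ρ x * (u x) ^ 2 - ρ (x + z) * (u (x + z)) ^ 2) / |z| ^ (1 + α)))
        =ᶠ[nhdsWithin (0:ℝ) (Set.Ioi 0)] (fun ε : ℝ => ∫ z in {z : ℝ | ε ≤ |z|}, g z) :=
      eventually_mem_nhdsWithin.mono fun ε hε => (htrunc ε hε).symm
    have h2 : Tendsto (fun ε : ℝ => ∫ z in {z : ℝ | ε ≤ |z|}, g z)
        (nhdsWithin 0 (Set.Ioi 0))
        (nhds (2 * ρ x * u x * Lρu x - ρ x * (u x) ^ 2 * Lρ x - ρ x * Lρu2 x)) :=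
      hcomb.congr' hev
    have hval : 2 * ρ x * u x * Lρu x - ρ x * (u x) ^ 2 * Lρ x - ρ x * Lρu2 x = ∫ z, g z :=
      tendsto_nhds_unique h2 hgt
    rw [hval]
    calc (∫ z, g z)
        = ∫ z, ρ x * ρ (x + z) * (u x - u (x + z)) ^ 2 / |x - (x + z)| ^ (1 + α) := by
          refine integral_congr_ae (ae_of_all _ fun z => ?_)
          simp only [hgdef]
          rw [show x - (x + z) = -z from by ring, abs_neg]
      _ = ∫ y : ℝ, ρ x * ρ y * (u x - u y) ^ 2 / |x - y| ^ (1 + α) :=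
          integral_add_left_eq_self (fun y => ρ x * ρ y * (u x - u y) ^ 2 / |x - y| ^ (1 + α)) x
  exact intervalIntegral.integral_congr fun x _ => key x
end

section
/- Let g be smooth and 2π-periodic, α ∈ (0,2), and define D_α g'(x) = ∫_ℝ |g'(x) − g'(x+z)|² |z|^{-1-α} dz. Then there is a constant C = C(α, φ) such that for all x and all r > 0: |Λ_α g(x)| ≤ C r^{1−α/2} (D_α g'(x))^{1/2} + C r^{-α} ‖g‖_{L^∞}. -/
open MeasureTheory Filter Set
open scoped Real ContDiff

lemma div_le_div_same' {a b c : ℝ} (h : a ≤ b) (hc : 0 ≤ c) : a / c ≤ b / c := by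
  rw [div_eq_mul_inv, div_eq_mul_inv]
  exact mul_le_mul_of_nonneg_right h (inv_nonneg.mpr hc)


lemma negrestrict (s : Set ℝ) : (volume : Measure ℝ).restrict (-s) = Measure.map Neg.neg ((volume : Measure ℝ).restrict s) := by
  have A : MeasurableEmbedding fun x : ℝ => -x :=
    (Homeomorph.neg ℝ).isClosedEmbedding.measurableEmbedding
  have h := A.restrict_map (μ := (volume : Measure ℝ)) (s := -s)
  rw [Measure.map_neg_eq_self] at h
  rw [h]
  congr 1
  ext x
  simp [Set.mem_neg]

lemma integral_comp_neg_set (f : ℝ → ℝ) (s : Set ℝ) : ∫ x in s, f (-x) = ∫ x in -s, f x := by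
  have A : MeasurableEmbedding fun x : ℝ => -x :=
    (Homeomorph.neg ℝ).isClosedEmbedding.measurableEmbedding
  rw [negrestrict, A.integral_map]

lemma integrableOn_comp_neg_iff (f : ℝ → ℝ) (s : Set ℝ) :
    IntegrableOn (fun x => f (-x)) s ↔ IntegrableOn f (-s) := by
  have A : MeasurableEmbedding fun x : ℝ => -x :=
    (Homeomorph.neg ℝ).isClosedEmbedding.measurableEmbedding
  unfold IntegrableOn
  rw [negrestrict, A.integrable_map_iff]
  rfl

lemma periodic_bdd {f : ℝ → ℝ} (hf : Continuous f) (hp : Function.Periodic f (2 * Real.pi)) :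
    ∃ M : ℝ, 0 ≤ M ∧ ∀ x, |f x| ≤ M := by
  obtain ⟨M, hM⟩ := (isCompact_Icc (a := (0:ℝ)) (b := 2 * Real.pi)).exists_bound_of_continuousOn
    hf.continuousOn
  refine ⟨max M 0, le_max_right _ _, fun x => ?_⟩
  obtain ⟨y, hy, hxy⟩ := hp.exists_mem_Ico₀ (by positivity) x
  calc |f x| = ‖f y‖ := by rw [hxy]; rfl
  _ ≤ M := hM y (Ico_subset_Icc_self hy)
  _ ≤ max M 0 := le_max_left _ _


lemma intOn_pos (p : ℝ) (hp : -1 < p) (a : ℝ) (ha : 0 < a) :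
    IntegrableOn (fun z : ℝ => |z| ^ p) (Ioc 0 a) := by
  have h := (intervalIntegral.intervalIntegrable_rpow' hp (a := 0) (b := a))
  rw [intervalIntegrable_iff_integrableOn_Ioc_of_le ha.le] at h
  exact h.congr_fun (fun z hz => by rw [abs_of_pos hz.1]) measurableSet_Ioc

lemma intOn_neg_set (f : ℝ → ℝ) (hf : ∀ z, f (-z) = f z) (s : Set ℝ)
    (h : IntegrableOn f (-s)) : IntegrableOn f s := by
  have h2 : IntegrableOn (fun z => f (-z)) s := (integrableOn_comp_neg_iff f s).mpr h
  simpa only [hf] using h2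

lemma intOn_abs (p : ℝ) (hp : -1 < p) (a : ℝ) (ha : 0 < a) :
    IntegrableOn (fun z : ℝ => |z| ^ p) (Icc (-a) a) := by
  have hpos := intOn_pos p hp a ha
  have hneg : IntegrableOn (fun z : ℝ => |z| ^ p) (Ico (-a) 0) := by
    refine intOn_neg_set _ (fun z => by rw [abs_neg]) _ ?_
    have : -Ico (-a) (0:ℝ) = Ioc 0 a := by
      ext z; simp only [Set.mem_neg, Set.mem_Ico, Set.mem_Ioc]
      constructor <;> intro h <;> constructor <;> linarith [h.1, h.2]
    rw [this]; exact hpos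
  have hsub : Icc (-a) a ⊆ Ico (-a) 0 ∪ Icc 0 a := by
    intro z hz
    rcases lt_or_ge z 0 with h | h
    · exact Or.inl ⟨hz.1, h⟩
    · exact Or.inr ⟨h, hz.2⟩
  refine (hneg.union ?_).mono_set hsub
  rw [integrableOn_Icc_iff_integrableOn_Ioc]
  exact hpos

lemma intOn_tail (q : ℝ) (hq : q < -1) (r : ℝ) (hr : 0 < r) :
    IntegrableOn (fun z : ℝ => |z| ^ q) {z : ℝ | r < |z|} := by
  have hpos : IntegrableOn (fun z : ℝ => |z| ^ q) (Ioi r) := by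
    refine (integrableOn_Ioi_rpow_of_lt hq hr).congr_fun (fun z hz => ?_) measurableSet_Ioi
    rw [abs_of_pos (hr.trans hz)]
  have hneg : IntegrableOn (fun z : ℝ => |z| ^ q) (Iio (-r)) := by
    refine intOn_neg_set _ (fun z => by rw [abs_neg]) _ ?_
    have : -Iio (-r) = Ioi r := by
      ext z; simp only [Set.mem_neg, Set.mem_Iio, Set.mem_Ioi]; constructor <;> intro h <;> linarith
    rw [this]; exact hpos
  have hsub : {z : ℝ | r < |z|} ⊆ Iio (-r) ∪ Ioi r := by
    intro z hz
    simp only [Set.mem_setOf_eq] at hz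
    rcases le_or_gt z 0 with h | h
    · left; simp only [Set.mem_Iio]; rw [abs_of_nonpos h] at hz; linarith [hz]
    · right; simp only [Set.mem_Ioi]; rwa [abs_of_pos h] at hz
  exact (hneg.union hpos).mono_set hsub


lemma abs_sq_div_rpow (z : ℝ) (α : ℝ) (hα : 0 < α) :
    |z| ^ 2 / |z| ^ (1 + α) ≤ |z| ^ (1 - α) := by
  rcases eq_or_ne z 0 with rfl | hz
  · simp only [abs_zero]
    rw [Real.zero_rpow (by positivity : (1:ℝ) + α ≠ 0)]
    simp only [div_zero]
    exact Real.rpow_nonneg le_rfl _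
  · have h0 : (0:ℝ) < |z| := abs_pos.mpr hz
    rw [show |z| ^ (2:ℕ) = |z| ^ (2:ℝ) by rw [Real.rpow_two],
      ← Real.rpow_sub h0]
    rw [show (2:ℝ) - (1+α) = 1 - α by ring]

lemma D_integrable (α : ℝ) (hα0 : 0 < α) (hα2 : α < 2) (h : ℝ → ℝ) (hc : Continuous h)
    (M1 M2 : ℝ) (hb : ∀ z, |h z| ≤ M1) (hl : ∀ z, |h z| ≤ M2 * |z|) :
    Integrable (fun z : ℝ => (h z) ^ 2 / |z| ^ (1 + α)) := by
  have hmeas : AEStronglyMeasurable (fun z : ℝ => (h z) ^ 2 / |z| ^ (1 + α)) volume := by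
    exact (((hc.pow 2).measurable).div
      ((measurable_id.abs.pow_const (1+α) : Measurable fun z : ℝ => |z| ^ (1+α)))).aestronglyMeasurable
  have hnonneg : ∀ z : ℝ, 0 ≤ (h z) ^ 2 / |z| ^ (1 + α) := fun z => by positivity
  have hM2 : 0 ≤ M2 := by
    have := (abs_nonneg (h 1)).trans (hl 1); simpa using this
  have hcore : IntegrableOn (fun z : ℝ => (h z) ^ 2 / |z| ^ (1 + α)) (Icc (-1) 1) := by
    refine Integrable.mono' (((intOn_abs (1-α) (by linarith) 1 one_pos)).const_mul (M2^2))
      hmeas.restrict (Filter.Eventually.of_forall fun z => ?_)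
    rw [Real.norm_eq_abs, abs_of_nonneg (hnonneg z)]
    calc (h z) ^ 2 / |z| ^ (1 + α) ≤ (M2 * |z|) ^ 2 / |z| ^ (1 + α) := by
          refine div_le_div_same' ?_ (by positivity)
          calc (h z)^2 = |h z| ^ 2 := (sq_abs _).symm
          _ ≤ (M2 * |z|) ^ 2 := by
              have := hl z
              have h0 : (0:ℝ) ≤ |h z| := abs_nonneg _
              nlinarith
    _ = M2 ^ 2 * (|z| ^ 2 / |z| ^ (1 + α)) := by ring
    _ ≤ M2 ^ 2 * |z| ^ (1 - α) := by
          gcongr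
          exact abs_sq_div_rpow z α hα0
  have htail : IntegrableOn (fun z : ℝ => (h z) ^ 2 / |z| ^ (1 + α)) {z : ℝ | 1 < |z|} := by
    refine Integrable.mono' (((intOn_tail (-(1+α)) (by linarith) 1 one_pos)).const_mul (M1^2))
      hmeas.restrict (Filter.Eventually.of_forall fun z => ?_)
    rw [Real.norm_eq_abs, abs_of_nonneg (hnonneg z)]
    have hM1 : 0 ≤ M1 := (abs_nonneg _).trans (hb 0)
    calc (h z) ^ 2 / |z| ^ (1 + α) ≤ M1 ^ 2 / |z| ^ (1 + α) := by
          refine div_le_div_same' ?_ (by positivity)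
          calc (h z)^2 = |h z| ^ 2 := (sq_abs _).symm
          _ ≤ M1 ^ 2 := by
              have := hb z
              have h0 : (0:ℝ) ≤ |h z| := abs_nonneg _
              nlinarith
    _ = M1 ^ 2 * (|z| ^ (1 + α))⁻¹ := by ring
    _ = M1 ^ 2 * |z| ^ (-(1+α)) := by rw [Real.rpow_neg (abs_nonneg z)]
  have huniv : (univ : Set ℝ) ⊆ Icc (-1) 1 ∪ {z : ℝ | 1 < |z|} := by
    intro z _
    rcases le_or_gt |z| 1 with h1 | h1
    · left; exact abs_le.mp h1
    · right; exact h1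
  rw [← integrableOn_univ]
  exact (hcore.union htail).mono_set huniv



lemma amgm (a c lam : ℝ) (ha : 0 ≤ a) (hc : 0 < c) (hl : 0 < lam) :
    a ≤ (a ^ 2 / c) / (2 * lam) + lam * c / 2 := by
  rw [div_div, div_add_div _ _ (by positivity) (by norm_num), le_div_iff₀ (by positivity)]
  nlinarith [sq_nonneg (a - lam * c)]

lemma second_diff_bound (α : ℝ) (hα0 : 0 < α) (hα2 : α < 2)
    (g : ℝ → ℝ) (hg : ContDiff ℝ (⊤ : ℕ∞) g) (x : ℝ)
    (hDi : Integrable (fun z : ℝ => (deriv g x - deriv g (x + z)) ^ 2 / |z| ^ (1 + α)))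
    (w lam : ℝ) (hw : 0 < w) (hlam : 0 < lam) :
    |2 * g x - g (x + w) - g (x - w)| ≤
      (∫ z : ℝ, (deriv g x - deriv g (x + z)) ^ 2 / |z| ^ (1 + α)) / lam
        + lam * w ^ (2 + α) / (2 + α) := by
  set F : ℝ → ℝ := fun z => (deriv g x - deriv g (x + z)) ^ 2 / |z| ^ (1 + α) with hF
  set D : ℝ := ∫ z : ℝ, F z with hD
  have hFnn : ∀ z, 0 ≤ F z := fun z => by positivity
  have hg' : Continuous (deriv g) := hg.continuous_deriv (by simp)
  have hgd : Differentiable ℝ g := hg.differentiable (by simp)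
  -- FTC
  have hder : ∀ t : ℝ, HasDerivAt (fun s => g (x + s) + g (x - s))
      (deriv g (x + t) - deriv g (x - t)) t := by
    intro t
    have h1 : HasDerivAt (fun s : ℝ => g (x + s)) (deriv g (x + t) * 1) t :=
      (hgd (x + t)).hasDerivAt.comp t ((hasDerivAt_id t).const_add x)
    have h2 : HasDerivAt (fun s : ℝ => g (x - s)) (deriv g (x - t) * (-1)) t :=
      (hgd (x - t)).hasDerivAt.comp t ((hasDerivAt_id t).neg.const_add x)
    exact (h1.add h2).congr_deriv (by ring)
  have hcont : Continuous fun t : ℝ => deriv g (x + t) - deriv g (x - t) :=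
    (hg'.comp (continuous_const.add continuous_id)).sub
      (hg'.comp (continuous_const.sub continuous_id))
  have hftc : ∫ t in (0:ℝ)..w, (deriv g (x + t) - deriv g (x - t))
      = (g (x + w) + g (x - w)) - (g (x + 0) + g (x - 0)) :=
    intervalIntegral.integral_eq_sub_of_hasDerivAt (fun t _ => hder t)
      (hcont.intervalIntegrable 0 w)
  have heq : |2 * g x - g (x + w) - g (x - w)|
      = |∫ t in (0:ℝ)..w, (deriv g (x + t) - deriv g (x - t))| := by
    rw [hftc]; simp only [add_zero, sub_zero]
    rw [abs_sub_comm]; ring_nf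
  rw [heq]
  -- bound by integral of abs
  have h1 : |∫ t in (0:ℝ)..w, (deriv g (x + t) - deriv g (x - t))|
      ≤ ∫ t in (0:ℝ)..w, |deriv g (x + t) - deriv g (x - t)| :=
    intervalIntegral.abs_integral_le_integral_abs hw.le
  refine h1.trans ?_
  rw [intervalIntegral.integral_of_le hw.le]
  set B : ℝ → ℝ := fun t => F t / (2 * lam) + F (-t) / (2 * lam) + lam * t ^ (1 + α) with hB
  have hFneg_int : IntegrableOn (fun t => F (-t)) (Ioc 0 w) :=
    (integrableOn_comp_neg_iff F (Ioc 0 w)).mpr hDi.integrableOn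
  have hrpow_int : IntegrableOn (fun t : ℝ => t ^ (1 + α)) (Ioc 0 w) := by
    have h := intervalIntegral.intervalIntegrable_rpow' (a := 0) (b := w)
      (by linarith : (-1:ℝ) < 1 + α)
    rwa [intervalIntegrable_iff_integrableOn_Ioc_of_le hw.le] at h
  have hBint : IntegrableOn B (Ioc 0 w) :=
    ((hDi.integrableOn.div_const _).add (hFneg_int.div_const _)).add (hrpow_int.const_mul _)
  have habs_int : IntegrableOn (fun t => |deriv g (x + t) - deriv g (x - t)|) (Ioc 0 w) :=
    hcont.abs.integrableOn_Ioc
  have hptwise : ∀ t ∈ Ioc (0:ℝ) w, |deriv g (x + t) - deriv g (x - t)| ≤ B t := by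
    intro t ht
    have ht0 : (0:ℝ) < t := ht.1
    have hc : (0:ℝ) < t ^ (1 + α) := Real.rpow_pos_of_pos ht0 _
    have ha1 := amgm |deriv g (x + t) - deriv g x| (t ^ (1 + α)) lam (abs_nonneg _) hc hlam
    have ha2 := amgm |deriv g x - deriv g (x - t)| (t ^ (1 + α)) lam (abs_nonneg _) hc hlam
    have hFt : F t = |deriv g (x + t) - deriv g x| ^ 2 / t ^ (1 + α) := by
      simp only [hF]
      rw [abs_of_pos ht0, sq_abs]
      ring_nf
    have hFnt : F (-t) = |deriv g x - deriv g (x - t)| ^ 2 / t ^ (1 + α) := by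
      simp only [hF, abs_neg, ← sub_eq_add_neg]
      rw [abs_of_pos ht0, sq_abs]
    calc |deriv g (x + t) - deriv g (x - t)|
        ≤ |deriv g (x + t) - deriv g x| + |deriv g x - deriv g (x - t)| := by
          have := abs_sub_le (deriv g (x + t)) (deriv g x) (deriv g (x - t)); linarith
    _ ≤ (|deriv g (x + t) - deriv g x| ^ 2 / t ^ (1 + α)) / (2 * lam) + lam * t ^ (1 + α) / 2
        + ((|deriv g x - deriv g (x - t)| ^ 2 / t ^ (1 + α)) / (2 * lam)
          + lam * t ^ (1 + α) / 2) := by linarith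
    _ = B t := by rw [hB]; rw [← hFt, ← hFnt]; ring
  have h2 := setIntegral_mono_on habs_int hBint measurableSet_Ioc hptwise
  refine h2.trans ?_
  have hsplit : ∫ t in Ioc 0 w, B t
      = (∫ t in Ioc 0 w, F t) / (2 * lam) + (∫ t in Ioc 0 w, F (-t)) / (2 * lam)
        + lam * ∫ t in Ioc 0 w, t ^ (1 + α) := by
    have i1 : Integrable (fun t => F t / (2 * lam)) (volume.restrict (Ioc 0 w)) :=
      hDi.integrableOn.div_const _
    have i2 : Integrable (fun t => F (-t) / (2 * lam)) (volume.restrict (Ioc 0 w)) :=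
      hFneg_int.div_const _
    have i3 : Integrable (fun t : ℝ => lam * t ^ (1 + α)) (volume.restrict (Ioc 0 w)) :=
      hrpow_int.const_mul _
    have i12 : Integrable (fun t => F t / (2 * lam) + F (-t) / (2 * lam))
        (volume.restrict (Ioc 0 w)) := i1.add i2
    simp only [hB]
    rw [integral_add i12 i3, integral_add i1 i2, integral_div, integral_div, MeasureTheory.integral_const_mul]
  rw [hsplit]
  have hDnn : (0:ℝ) ≤ D := integral_nonneg hFnn
  have hF1 : ∫ t in Ioc 0 w, F t ≤ D :=
    setIntegral_le_integral hDi (Eventually.of_forall hFnn)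
  have hF2 : ∫ t in Ioc 0 w, F (-t) ≤ D := by
    rw [integral_comp_neg_set F (Ioc 0 w)]
    exact setIntegral_le_integral hDi (Eventually.of_forall hFnn)
  have hrv : ∫ t in Ioc 0 w, t ^ (1 + α) = w ^ (2 + α) / (2 + α) := by
    rw [← intervalIntegral.integral_of_le hw.le,
      integral_rpow (Or.inl (by linarith : (-1:ℝ) < 1 + α))]
    rw [Real.zero_rpow (by positivity : (1:ℝ) + α + 1 ≠ 0)]
    rw [show (1:ℝ) + α + 1 = 2 + α by ring]
    ring
  rw [hrv]
  have hl2 : (0:ℝ) ≤ 2 * lam := by linarith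
  have e1 : (∫ t in Ioc 0 w, F t) / (2 * lam) ≤ D / (2 * lam) := div_le_div_same' hF1 hl2
  have e2 : (∫ t in Ioc 0 w, F (-t)) / (2 * lam) ≤ D / (2 * lam) := div_le_div_same' hF2 hl2
  have e3 : D / (2 * lam) + D / (2 * lam) = D / lam := by
    field_simp
    ring
  have e4 : lam * (w ^ (2 + α) / (2 + α)) = lam * w ^ (2 + α) / (2 + α) := by ring
  linarith


lemma main_est (α : ℝ) (hα0 : 0 < α) (hα2 : α < 2)
    (g : ℝ → ℝ) (hg : ContDiff ℝ (⊤ : ℕ∞) g) (Mg : ℝ) (hMg : ∀ y, |g y| ≤ Mg) (x : ℝ)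
    (hDi : Integrable (fun z : ℝ => (deriv g x - deriv g (x + z)) ^ 2 / |z| ^ (1 + α)))
    (r ε μ : ℝ) (hr : 0 < r) (hε : 0 < ε) (her : ε ≤ r) (hμ : 0 < μ) :
    |∫ z in {z : ℝ | ε ≤ |z|}, (g x - g (x + z)) / |z| ^ (1 + α)| ≤
      ((∫ z : ℝ, (deriv g x - deriv g (x + z)) ^ 2 / |z| ^ (1 + α)) / μ + μ)
          * (r ^ (1 - α / 2) / (1 - α / 2))
        + 2 * Mg * (2 * r ^ (-α) / α) := by
  set F : ℝ → ℝ := fun z => (deriv g x - deriv g (x + z)) ^ 2 / |z| ^ (1 + α) with hF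
  set D : ℝ := ∫ z : ℝ, F z with hD
  set f : ℝ → ℝ := fun z => (g x - g (x + z)) / |z| ^ (1 + α) with hf
  have hMg0 : 0 ≤ Mg := (abs_nonneg _).trans (hMg x)
  have hgc : Continuous g := hg.continuous
  have hfm : Measurable f := by
    exact ((continuous_const.sub (hgc.comp (continuous_const.add continuous_id))).measurable).div
      (measurable_id.abs.pow_const (1 + α))
  -- continuity of f away from 0
  have hfco : ∀ s : Set ℝ, s ⊆ {z : ℝ | z ≠ 0} → ContinuousOn f s := by
    intro s hs
    refine ContinuousOn.div
      ((continuous_const.sub (hgc.comp (continuous_const.add continuous_id))).continuousOn) 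
      ((continuous_abs.rpow_const (fun z => Or.inr (by positivity))).continuousOn) ?_
    intro z hz
    have : z ≠ 0 := hs hz
    positivity
  -- sets
  set Bt : Set ℝ := {z : ℝ | r < |z|} with hBt
  have hBtm : MeasurableSet Bt := measurableSet_lt measurable_const measurable_id.abs
  have hIP : IntegrableOn f (Icc ε r) :=
    (hfco _ (fun z hz => ne_of_gt (lt_of_lt_of_le hε hz.1))).integrableOn_compact isCompact_Icc
  have hIN : IntegrableOn f (Icc (-r) (-ε)) :=
    (hfco _ (fun z hz => ne_of_lt (lt_of_le_of_lt hz.2 (by linarith)))).integrableOn_compact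
      isCompact_Icc
  have hfb : ∀ z ∈ Bt, |f z| ≤ 2 * Mg * |z| ^ (-(1 + α)) := by
    intro z hz
    have hz0 : (0:ℝ) < |z| := lt_trans hr hz
    rw [hf]
    rw [abs_div, abs_of_nonneg (by positivity : (0:ℝ) ≤ |z| ^ (1 + α))]
    rw [Real.rpow_neg (abs_nonneg z), div_eq_mul_inv]
    have h1 : |g x - g (x + z)| ≤ 2 * Mg := by
      calc |g x - g (x + z)| ≤ |g x| + |g (x + z)| := abs_sub _ _
      _ ≤ 2 * Mg := by linarith [hMg x, hMg (x + z)]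
    exact mul_le_mul_of_nonneg_right h1 (by positivity)
  have hIB : IntegrableOn f Bt := by
    refine Integrable.mono' ((intOn_tail (-(1+α)) (by linarith) r hr).const_mul (2 * Mg))
      hfm.aestronglyMeasurable.restrict
      ((ae_restrict_iff' hBtm).mpr (Eventually.of_forall fun z hz => ?_))
    rw [Real.norm_eq_abs]
    exact hfb z hz
  -- split the domain
  have hsetsplit : {z : ℝ | ε ≤ |z|} = (Icc (-r) (-ε) ∪ Icc ε r) ∪ Bt := by
    ext z
    simp only [mem_setOf_eq, mem_union, mem_Icc, hBt]
    constructor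
    · intro h
      rcases le_or_gt |z| r with h2 | h2
      · left
        rcases le_or_gt 0 z with h3 | h3
        · right; rw [abs_of_nonneg h3] at h h2; exact ⟨h, h2⟩
        · left; rw [abs_of_neg h3] at h h2; constructor <;> linarith
      · right; exact h2
    · rintro ((⟨h1, h2⟩ | ⟨h1, h2⟩) | h)
      · rw [abs_of_neg (by linarith : z < 0)]; linarith
      · rw [abs_of_nonneg (by linarith : (0:ℝ) ≤ z)]; linarith
      · linarith
  have habsle : ∀ z : ℝ, z ∈ Icc (-r) (-ε) ∪ Icc ε r → |z| ≤ r := by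
    rintro z (hz | hz)
    · exact abs_le.mpr ⟨hz.1, by linarith [hz.2]⟩
    · exact abs_le.mpr ⟨by linarith [hz.1], hz.2⟩
  have hdisj : Disjoint (Icc (-r) (-ε) ∪ Icc ε r) Bt := by
    rw [Set.disjoint_left]
    intro z hz hzB
    rw [hBt, mem_setOf_eq] at hzB
    exact absurd (habsle z hz) (not_le.mpr hzB)
  have hdisj2 : Disjoint (Icc (-r) (-ε)) (Icc ε r) := by
    rw [Set.disjoint_left]
    intro z hz hz2
    have := hz.2; have := hz2.1; linarith
  rw [hsetsplit, setIntegral_union hdisj hBtm (hIN.union hIP) hIB,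
    setIntegral_union hdisj2 measurableSet_Icc hIN hIP]
  -- negative piece as reflected integral
  have hnegIcc : -Icc ε r = Icc (-r) (-ε) := by
    ext z; simp only [Set.mem_neg, mem_Icc]; constructor <;> intro h <;> constructor <;> linarith [h.1, h.2]
  have hNval : ∫ z in Icc (-r) (-ε), f z = ∫ z in Icc ε r, f (-z) := by
    rw [integral_comp_neg_set f (Icc ε r), hnegIcc]
  have hfnegI : IntegrableOn (fun z => f (-z)) (Icc ε r) := by
    rw [integrableOn_comp_neg_iff f _, hnegIcc]; exact hIN
  have hsum : Integrable (fun z => f (-z) + f z) (volume.restrict (Icc ε r)) := hfnegI.add hIP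
  have hcomb : (∫ z in Icc (-r) (-ε), f z) + (∫ z in Icc ε r, f z)
      = ∫ z in Icc ε r, (f (-z) + f z) := by
    rw [hNval, ← integral_add hfnegI hIP]
  have hDnn : (0:ℝ) ≤ D := integral_nonneg (fun z => by positivity)
  have hcoef : (0:ℝ) ≤ D / μ + μ := by positivity
  -- pointwise bound on Icc ε r
  have key : ∀ z ∈ Icc ε r, |f (-z) + f z| ≤ (D / μ + μ) * z ^ (-α / 2) := by
    intro z hz
    have hz0 : (0:ℝ) < z := lt_of_lt_of_le hε hz.1
    have hzp : (0:ℝ) < z ^ (1 + α) := Real.rpow_pos_of_pos hz0 _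
    have hlam : (0:ℝ) < μ * z ^ (-(1 + α / 2)) := by positivity
    have hsd := second_diff_bound α hα0 hα2 g hg x hDi z (μ * z ^ (-(1 + α / 2))) hz0 hlam
    have habs : |z| = z := abs_of_pos hz0
    have hsumeq : f (-z) + f z = (2 * g x - g (x + z) - g (x - z)) / z ^ (1 + α) := by
      simp only [hf, abs_neg, ← sub_eq_add_neg, habs]
      rw [← add_div]
      ring_nf
    rw [hsumeq, abs_div, abs_of_pos hzp]
    have e3 : D / (μ * z ^ (-(1 + α / 2))) = D / μ * z ^ (1 + α / 2) := by
      rw [Real.rpow_neg hz0.le]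
      field_simp
    have e1 : μ * z ^ (-(1 + α / 2)) * z ^ (2 + α) / (2 + α) ≤ μ * z ^ (1 + α / 2) := by
      rw [mul_assoc, ← Real.rpow_add hz0, show -(1 + α / 2) + (2 + α) = 1 + α / 2 by ring]
      rw [div_le_iff₀ (by linarith : (0:ℝ) < 2 + α)]
      nlinarith [Real.rpow_nonneg hz0.le (1 + α / 2), mul_nonneg hμ.le (Real.rpow_nonneg hz0.le (1 + α / 2))]
    have hup : |2 * g x - g (x + z) - g (x - z)| ≤ (D / μ + μ) * z ^ (1 + α / 2) := by
      calc |2 * g x - g (x + z) - g (x - z)|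
          ≤ D / (μ * z ^ (-(1 + α / 2))) + μ * z ^ (-(1 + α / 2)) * z ^ (2 + α) / (2 + α) := hsd
      _ ≤ D / μ * z ^ (1 + α / 2) + μ * z ^ (1 + α / 2) := by rw [e3]; linarith
      _ = (D / μ + μ) * z ^ (1 + α / 2) := by ring
    calc |2 * g x - g (x + z) - g (x - z)| / z ^ (1 + α)
        ≤ (D / μ + μ) * z ^ (1 + α / 2) / z ^ (1 + α) := div_le_div_same' hup hzp.le
    _ = (D / μ + μ) * z ^ (-α / 2) := by
        rw [mul_div_assoc, ← Real.rpow_sub hz0, show (1:ℝ) + α / 2 - (1 + α) = -α / 2 by ring]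
  -- integral bound on the core
  have hrpow_core_int : IntegrableOn (fun z : ℝ => z ^ (-α / 2)) (Ioc 0 r) := by
    have h := intervalIntegral.intervalIntegrable_rpow' (a := 0) (b := r)
      (by linarith : (-1:ℝ) < -α / 2)
    rwa [intervalIntegrable_iff_integrableOn_Ioc_of_le hr.le] at h
  have hcore_val : ∫ z in Ioc (0:ℝ) r, z ^ (-α / 2) = r ^ (1 - α / 2) / (1 - α / 2) := by
    rw [← intervalIntegral.integral_of_le hr.le,
      integral_rpow (Or.inl (by linarith : (-1:ℝ) < -α / 2)),
      Real.zero_rpow (by intro h; nlinarith : -α / 2 + 1 ≠ 0),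
      show -α / 2 + 1 = 1 - α / 2 by ring]
    ring
  have hcore : |∫ z in Icc ε r, (f (-z) + f z)| ≤ (D / μ + μ) * (r ^ (1 - α / 2) / (1 - α / 2)) := by
    calc |∫ z in Icc ε r, (f (-z) + f z)| ≤ ∫ z in Icc ε r, |f (-z) + f z| := by
          simpa [Real.norm_eq_abs] using
            norm_integral_le_integral_norm (μ := volume.restrict (Icc ε r))
              (fun z => f (-z) + f z)
    _ ≤ ∫ z in Icc ε r, (D / μ + μ) * z ^ (-α / 2) := by
          refine setIntegral_mono_on hsum.abs ((hrpow_core_int.mono_set ?_).const_mul _)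
            measurableSet_Icc key
          intro z hz; exact ⟨lt_of_lt_of_le hε hz.1, hz.2⟩
    _ ≤ ∫ z in Ioc (0:ℝ) r, (D / μ + μ) * z ^ (-α / 2) := by
          refine setIntegral_mono_set (hrpow_core_int.const_mul _) ?_ ?_
          · refine (ae_restrict_iff' measurableSet_Ioc).mpr (Eventually.of_forall fun z hz => ?_)
            exact mul_nonneg hcoef (Real.rpow_nonneg hz.1.le _)
          · refine HasSubset.Subset.eventuallyLE ?_
            intro z hz; exact ⟨lt_of_lt_of_le hε hz.1, hz.2⟩
    _ = (D / μ + μ) * (r ^ (1 - α / 2) / (1 - α / 2)) := by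
          rw [MeasureTheory.integral_const_mul, hcore_val]
  -- tail bound
  have hBtsplit : Bt = Iio (-r) ∪ Ioi r := by
    ext z
    simp only [hBt, mem_setOf_eq, mem_union, mem_Iio, mem_Ioi]
    constructor
    · intro h
      rcases le_or_gt z 0 with h2 | h2
      · left; rw [abs_of_nonpos h2] at h; linarith
      · right; rwa [abs_of_pos h2] at h
    · rintro (h | h)
      · rw [abs_of_neg (by linarith : z < 0)]; linarith
      · rwa [abs_of_pos (by linarith : (0:ℝ) < z)]
  have hIoi_val : ∫ z in Ioi r, |z| ^ (-(1 + α)) = r ^ (-α) / α := by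
    rw [setIntegral_congr_fun measurableSet_Ioi
      (fun z (hz : z ∈ Ioi r) => by rw [abs_of_pos (hr.trans hz)])]
    rw [integral_Ioi_rpow_of_lt (by linarith : -(1 + α) < -1) hr]
    rw [show -(1 + α) + 1 = -α by ring]
    rw [div_eq_div_iff (by intro h; nlinarith : -α ≠ 0) (by positivity : α ≠ 0)]
    ring
  have hIio_val : ∫ z in Iio (-r), |z| ^ (-(1 + α)) = r ^ (-α) / α := by
    have := integral_comp_neg_set (fun z : ℝ => |z| ^ (-(1 + α))) (Ioi r)
    simp only [abs_neg] at this
    rw [Set.neg_Ioi] at this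
    rw [← this, hIoi_val]
  have htail_mem1 : Iio (-r) ⊆ Bt := by rw [hBtsplit]; exact subset_union_left
  have htail_mem2 : Ioi r ⊆ Bt := by rw [hBtsplit]; exact subset_union_right
  have hq := intOn_tail (-(1 + α)) (by linarith) r hr
  have htail_val : ∫ z in Bt, |z| ^ (-(1 + α)) = 2 * r ^ (-α) / α := by
    rw [hBtsplit, setIntegral_union (by
        rw [Set.disjoint_left]; intro z hz hz2
        simp only [mem_Iio] at hz; simp only [mem_Ioi] at hz2; linarith)
      measurableSet_Ioi (hq.mono_set htail_mem1) (hq.mono_set htail_mem2)]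
    rw [hIio_val, hIoi_val]; ring
  have htailbd : |∫ z in Bt, f z| ≤ 2 * Mg * (2 * r ^ (-α) / α) := by
    calc |∫ z in Bt, f z| ≤ ∫ z in Bt, |f z| := by
          simpa [Real.norm_eq_abs] using
            norm_integral_le_integral_norm (μ := volume.restrict Bt) f
    _ ≤ ∫ z in Bt, 2 * Mg * |z| ^ (-(1 + α)) := by
          exact setIntegral_mono_on hIB.abs (hq.const_mul _) hBtm hfb
    _ = 2 * Mg * (2 * r ^ (-α) / α) := by
          rw [MeasureTheory.integral_const_mul, htail_val]
  rw [hcomb]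
  exact (abs_add_le _ _).trans (add_le_add hcore htailbd)

lemma periodic_deriv' (f : ℝ → ℝ) (c : ℝ) (hp : Function.Periodic f c) :
    Function.Periodic (deriv f) c := by
  intro x
  have h : (fun y => f (y + c)) = f := funext hp
  calc deriv f (x + c) = deriv (fun y => f (y + c)) x := (deriv_comp_add_const f c x).symm
  _ = deriv f x := by rw [h]

/-- Nonlinear maximum principle type bound:
`|Λ_α g(x)| ≤ C r^{1−α/2} (D_α g'(x))^{1/2} + C r^{-α} ‖g‖_∞`, `C = C(α, φ)`. -/
theorem stmt8 (α : ℝ) (hα0 : 0 < α) (hα2 : α < 2)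
    (φ : ℝ → ℝ)
    (hφs : ContDiff ℝ (⊤ : ℕ∞) φ) (hφc : HasCompactSupport φ)
    (hφe : ∀ x, φ (-x) = φ x)
    (hφ1 : ∀ x ∈ Set.Icc (-1:ℝ) 1, φ x = 1)
    (hφsupp : Function.support φ ⊆ Set.Ioo (-2:ℝ) 2) :
    ∃ C : ℝ, 0 < C ∧ ∀ (g L : ℝ → ℝ) (Mg : ℝ),
      ContDiff ℝ (⊤ : ℕ∞) g → Function.Periodic g (2 * Real.pi) →
      (∀ x, |g x| ≤ Mg) →
      (∀ x : ℝ, Tendsto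
        (fun ε : ℝ => ∫ z in {z : ℝ | ε ≤ |z|}, (g x - g (x + z)) / |z| ^ (1 + α))
        (nhdsWithin 0 (Set.Ioi 0)) (nhds (L x))) →
      ∀ (x r : ℝ), 0 < r →
        |L x| ≤ C * r ^ (1 - α / 2) *
            Real.sqrt (∫ z : ℝ, (deriv g x - deriv g (x + z)) ^ 2 / |z| ^ (1 + α))
          + C * r ^ (-α) * Mg := by
  have h1α2 : (0:ℝ) < 1 - α / 2 := by linarith
  refine ⟨2 / (1 - α / 2) + 4 / α, by positivity, ?_⟩
  intro g L Mg hg hper hMg hL x r hr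
  set F : ℝ → ℝ := fun z => (deriv g x - deriv g (x + z)) ^ 2 / |z| ^ (1 + α) with hF
  set D : ℝ := ∫ z : ℝ, F z with hD
  have hg8 : ContDiff ℝ ∞ g := hg.of_le (by simp)
  have hd1 : ContDiff ℝ ∞ (deriv g) := by simpa using hg8.iterate_deriv 1
  have hd1c : Continuous (deriv g) := hd1.continuous
  have hd2 : ContDiff ℝ ∞ (deriv (deriv g)) := by
    simpa [Function.iterate_succ, Function.comp] using hg8.iterate_deriv 2
  have hd2c : Continuous (deriv (deriv g)) := hd2.continuous
  have hperd : Function.Periodic (deriv g) (2 * Real.pi) := periodic_deriv' g _ hper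
  have hperdd : Function.Periodic (deriv (deriv g)) (2 * Real.pi) := periodic_deriv' _ _ hperd
  obtain ⟨M1, hM1nn, hM1⟩ := periodic_bdd hd1c hperd
  obtain ⟨M2, hM2nn, hM2⟩ := periodic_bdd hd2c hperdd
  have hlip : ∀ z : ℝ, |deriv g x - deriv g (x + z)| ≤ M2 * |z| := by
    intro z
    have h := Convex.norm_image_sub_le_of_norm_deriv_le (f := deriv g) (s := univ)
      (fun y _ => (hd1.differentiable (by simp)).differentiableAt)
      (fun y _ => by simpa [Real.norm_eq_abs] using hM2 y)
      convex_univ (mem_univ (x + z)) (mem_univ x)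
    simpa [Real.norm_eq_abs, abs_sub_comm] using h
  have hbd : ∀ z : ℝ, |deriv g x - deriv g (x + z)| ≤ 2 * M1 := by
    intro z
    calc |deriv g x - deriv g (x + z)| ≤ |deriv g x| + |deriv g (x + z)| := abs_sub _ _
    _ ≤ 2 * M1 := by linarith [hM1 x, hM1 (x + z)]
  have hDi : Integrable F :=
    D_integrable α hα0 hα2 (fun z => deriv g x - deriv g (x + z))
      (continuous_const.sub (hd1c.comp (continuous_const.add continuous_id)))
      (2 * M1) M2 hbd hlip
  have hDnn : (0:ℝ) ≤ D := integral_nonneg fun z => by positivity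
  have hstep1 : ∀ μ : ℝ, 0 < μ →
      |L x| ≤ (D / μ + μ) * (r ^ (1 - α / 2) / (1 - α / 2)) + 2 * Mg * (2 * r ^ (-α) / α) := by
    intro μ hμ
    have htd : Tendsto
        (fun ε : ℝ => |∫ z in {z : ℝ | ε ≤ |z|}, (g x - g (x + z)) / |z| ^ (1 + α)|)
        (nhdsWithin 0 (Set.Ioi 0)) (nhds |L x|) := (hL x).abs
    refine le_of_tendsto htd ?_
    filter_upwards [Ioo_mem_nhdsGT_of_mem (⟨le_refl (0:ℝ), hr⟩ : (0:ℝ) ∈ Ico (0:ℝ) r)]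
      with ε hε
    exact main_est α hα0 hα2 g hg Mg hMg x hDi r ε μ hr hε.1 hε.2.le hμ
  set K : ℝ := r ^ (1 - α / 2) / (1 - α / 2) with hK
  have hKpos : (0:ℝ) < K := by positivity
  have hstep2 : ∀ δ : ℝ, 0 < δ →
      |L x| ≤ (2 * Real.sqrt D + δ) * K + 2 * Mg * (2 * r ^ (-α) / α) := by
    intro δ hδ
    have hμ : (0:ℝ) < Real.sqrt D + δ := by positivity
    refine (hstep1 _ hμ).trans ?_
    have h1 : D / (Real.sqrt D + δ) ≤ Real.sqrt D := by
      rw [div_le_iff₀ hμ]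
      nlinarith [Real.sq_sqrt hDnn, Real.sqrt_nonneg D]
    have h2 : D / (Real.sqrt D + δ) + (Real.sqrt D + δ) ≤ 2 * Real.sqrt D + δ := by linarith
    have := mul_le_mul_of_nonneg_right h2 hKpos.le
    linarith
  have hfinal0 : |L x| ≤ 2 * Real.sqrt D * K + 2 * Mg * (2 * r ^ (-α) / α) := by
    refine le_of_forall_pos_le_add fun η hη => ?_
    have h := hstep2 (η / K) (by positivity)
    have he : (2 * Real.sqrt D + η / K) * K = 2 * Real.sqrt D * K + η := by
      field_simp
    linarith
  have hMg0 : (0:ℝ) ≤ Mg := (abs_nonneg _).trans (hMg x)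
  have hC1 : 2 / (1 - α / 2) ≤ 2 / (1 - α / 2) + 4 / α := by
    have : (0:ℝ) < 4 / α := by positivity
    linarith
  have hC2 : 4 / α ≤ 2 / (1 - α / 2) + 4 / α := by
    have : (0:ℝ) < 2 / (1 - α / 2) := by positivity
    linarith
  have e1 : 2 * Real.sqrt D * K = 2 / (1 - α / 2) * (r ^ (1 - α / 2) * Real.sqrt D) := by
    rw [hK]; ring
  have e2 : 2 * Mg * (2 * r ^ (-α) / α) = 4 / α * (r ^ (-α) * Mg) := by ring
  have b1 : 2 * Real.sqrt D * K
      ≤ (2 / (1 - α / 2) + 4 / α) * (r ^ (1 - α / 2) * Real.sqrt D) := by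
    rw [e1]
    exact mul_le_mul_of_nonneg_right hC1
      (mul_nonneg (Real.rpow_nonneg hr.le _) (Real.sqrt_nonneg _))
  have b2 : 2 * Mg * (2 * r ^ (-α) / α) ≤ (2 / (1 - α / 2) + 4 / α) * (r ^ (-α) * Mg) := by
    rw [e2]
    exact mul_le_mul_of_nonneg_right hC2
      (mul_nonneg (Real.rpow_nonneg hr.le _) hMg0)
  calc |L x| ≤ 2 * Real.sqrt D * K + 2 * Mg * (2 * r ^ (-α) / α) := hfinal0
  _ ≤ (2 / (1 - α / 2) + 4 / α) * (r ^ (1 - α / 2) * Real.sqrt D)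
      + (2 / (1 - α / 2) + 4 / α) * (r ^ (-α) * Mg) := add_le_add b1 b2
  _ = (2 / (1 - α / 2) + 4 / α) * r ^ (1 - α / 2) * Real.sqrt D
      + (2 / (1 - α / 2) + 4 / α) * r ^ (-α) * Mg := by ring
end
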